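/- arXiv:1705.08028 — 8 statements merged into one kernel-verified Lean document; each statement's English description precedes it below -/
import Mathlib

section
/- Let V be a real vector space, Ω ⊆ V a convex set, and x ∈ Ω. Then the refinement set Ref(x) = {s ∈ Ω | s ≻ x} is a face of Ω; that is, Ref(x) is convex, and whenever s' ∈ Ref(x), s ∈ Ω and s ≻ s', also s ∈ Ref(x). -/
/-- `s` refines `x` (written `s ≻ x`) relative to the convex set `Ω`:
there exist `p ∈ (0,1]` and `t ∈ Ω` with `x = p • s + (1-p) • t`. -/
def Refines {V : Type*} [AddCommGroup V] [Module ℝ V] (Ω : Set V) (s x : V) : Prop :=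
  ∃ p : ℝ, 0 < p ∧ p ≤ 1 ∧ ∃ t ∈ Ω, x = p • s + (1 - p) • t

/-- The refinement set of `x` in `Ω`: all states of `Ω` refining `x`. -/
def RefSet {V : Type*} [AddCommGroup V] [Module ℝ V] (Ω : Set V) (x : V) : Set V :=
  {s ∈ Ω | Refines Ω s x}

/-- `F` is a face of `Ω`: a convex subset of `Ω` closed under refinement. -/
def IsFaceOf {V : Type*} [AddCommGroup V] [Module ℝ V] (F Ω : Set V) : Prop :=
  F ⊆ Ω ∧ Convex ℝ F ∧ ∀ s' ∈ F, ∀ s ∈ Ω, Refines Ω s s' → s ∈ F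

section

variable {V : Type*} [AddCommGroup V] [Module ℝ V] {Ω : Set V}

lemma Convex.exists_eq_smul_add_smul_of_le (hΩ : Convex ℝ Ω) {s t x : V} (hs : s ∈ Ω)
    (ht : t ∈ Ω) {p q : ℝ} (hqp : q ≤ p) (hp : p ≤ 1) (hx : x = p • s + (1 - p) • t) :
    ∃ w ∈ Ω, x = q • s + (1 - q) • w := by
  obtain ⟨w, hw, hw_eq⟩ :=
    hΩ.exists_mem_add_smul_eq hs ht (sub_nonneg.2 hqp) (sub_nonneg.2 hp)
  refine ⟨w, hw, ?_⟩
  have hcoeff : p - q + (1 - p) = 1 - q := by ring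
  rw [hx, ← hcoeff, hw_eq]
  module

lemma Refines.trans (hΩ : Convex ℝ Ω) {s s' x : V} (hss' : Refines Ω s s')
    (hs'x : Refines Ω s' x) : Refines Ω s x := by
  obtain ⟨q, hq, hq1, u, hu, rfl⟩ := hss'
  obtain ⟨p, hp, hp1, t, ht, rfl⟩ := hs'x
  obtain ⟨w, hw, hw_eq⟩ := hΩ.exists_mem_add_smul_eq hu ht
    (mul_nonneg hp.le (sub_nonneg.2 hq1)) (sub_nonneg.2 hp1)
  refine ⟨p * q, mul_pos hp hq, mul_le_one₀ hp1 hq.le hq1, w, hw, ?_⟩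
  have hcoeff : p * (1 - q) + (1 - p) = 1 - p * q := by ring
  rw [← hcoeff, hw_eq]
  module

lemma convex_refSet (hΩ : Convex ℝ Ω) (x : V) : Convex ℝ (RefSet Ω x) := by
  rintro s₁ ⟨hs₁, p₁, hp₁, hp₁1, t₁, ht₁, hx₁⟩ s₂ ⟨hs₂, p₂, hp₂, hp₂1, t₂, ht₂, hx₂⟩
    a b ha hb hab
  refine ⟨hΩ hs₁ hs₂ ha hb hab, ?_⟩
  -- Lower both weights to `p = min p₁ p₂`; the decompositions then combine linearly.
  let p := min p₁ p₂
  obtain ⟨u₁, hu₁, hxu₁⟩ := hΩ.exists_eq_smul_add_smul_of_le hs₁ ht₁ (min_le_left p₁ p₂) hp₁1 hx₁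
  obtain ⟨u₂, hu₂, hxu₂⟩ := hΩ.exists_eq_smul_add_smul_of_le hs₂ ht₂ (min_le_right p₁ p₂) hp₂1 hx₂
  refine ⟨p, lt_min hp₁ hp₂, (min_le_left p₁ p₂).trans hp₁1, a • u₁ + b • u₂,
    hΩ hu₁ hu₂ ha hb hab, ?_⟩
  calc x = a • x + b • x := by rw [← add_smul, hab, one_smul]
    _ = a • (p • s₁ + (1 - p) • u₁) + b • (p • s₂ + (1 - p) • u₂) := by
      rw [← hxu₁, ← hxu₂]
    _ = p • (a • s₁ + b • s₂) + (1 - p) • (a • u₁ + b • u₂) := by module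

end

theorem refSet_isFaceOf_general {V : Type*} [AddCommGroup V] [Module ℝ V]
    (Ω : Set V) (hΩ : Convex ℝ Ω) (x : V) :
    IsFaceOf (RefSet Ω x) Ω :=
  ⟨fun _ hs => hs.1, convex_refSet hΩ x, fun _ hs' _ hs hss' => ⟨hs, hss'.trans hΩ hs'.2⟩⟩

/-- the refinement set of any `x ∈ Ω` is a face of `Ω`. -/
theorem refSet_isFaceOf {V : Type*} [AddCommGroup V] [Module ℝ V]
    (Ω : Set V) (hΩ : Convex ℝ Ω) (x : V) (hx : x ∈ Ω) :
    IsFaceOf (RefSet Ω x) Ω :=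
  refSet_isFaceOf_general Ω hΩ x
end

section
/- Let D be a decoherence map on a nonempty compact convex set Ω in a finite-dimensional real vector space V, and let s_i be an extreme point of D(Ω). Then for every s ∈ Ω: D(s) = s_i if and only if s ∈ Ref(s_i). -/
/-- A decoherence map on `Ω`: a linear map sending `Ω` into itself, idempotent
on `Ω`, and purity-decreasing (if `D ρ ≻ ρ` then `ρ ≻ D ρ`). -/
def IsDecoherence {V : Type*} [AddCommGroup V] [Module ℝ V]
    (Ω : Set V) (D : V →ₗ[ℝ] V) : Prop :=
  D '' Ω ⊆ Ω ∧ (∀ s ∈ Ω, D (D s) = D s) ∧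
    ∀ ρ ∈ Ω, Refines Ω (D ρ) ρ → Refines Ω ρ (D ρ)

/-!
If `D s = sᵢ`, purity decrease applied to the midpoint `ρ` of `s` and `sᵢ` (which decoheres to
`sᵢ`, hence is refined by it) shows that `ρ` refines `sᵢ`; as `s` refines `ρ`, it refines `sᵢ`.
Conversely, linear maps preserve refinement, so `s ≻ sᵢ` gives `D s ≻ D sᵢ = sᵢ` inside `D(Ω)`,
and an extreme point is refined only by itself.
-/

section Refines

variable {V : Type*} [AddCommGroup V] [Module ℝ V] {Ω : Set V} {s x y : V}

theorem Refines.trans_s5 (hΩ : Convex ℝ Ω) (hsy : Refines Ω s y) (hyx : Refines Ω y x) :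
    Refines Ω s x := by
  obtain ⟨a, ha0, ha1, t, ht, rfl⟩ := hsy
  obtain ⟨b, hb0, hb1, u, hu, rfl⟩ := hyx
  rcases (mul_le_one₀ ha1 hb0.le hb1).eq_or_lt with hab | hab
  · obtain ⟨rfl, rfl⟩ : a = 1 ∧ b = 1 := by constructor <;> nlinarith
    exact ⟨1, one_pos, le_rfl, t, ht, by module⟩
  · have hc : 0 < 1 - a * b := sub_pos.mpr hab
    refine ⟨a * b, mul_pos ha0 hb0, hab.le,
      (b * (1 - a) / (1 - a * b)) • t + ((1 - b) / (1 - a * b)) • u, ?_, ?_⟩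
    · refine hΩ ht hu (div_nonneg (by nlinarith) hc.le) (div_nonneg (by linarith) hc.le) ?_
      rw [← add_div, div_eq_one_iff_eq hc.ne']
      ring
    · simp only [smul_add, smul_smul, mul_div_cancel₀ _ hc.ne']
      module

theorem Refines.map {W : Type*} [AddCommGroup W] [Module ℝ W] (f : V →ₗ[ℝ] W)
    (h : Refines Ω s x) : Refines (f '' Ω) (f s) (f x) := by
  obtain ⟨p, hp0, hp1, t, ht, rfl⟩ := h
  exact ⟨p, hp0, hp1, f t, Set.mem_image_of_mem f ht, by simp⟩

theorem Refines.eq_of_mem_extremePoints (hs : s ∈ Ω) (h : Refines Ω s x)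
    (hx : x ∈ Ω.extremePoints ℝ) : s = x := by
  obtain ⟨p, hp0, hp1, t, ht, rfl⟩ := h
  rcases hp1.eq_or_lt with rfl | hp1
  · simp
  · exact hx.2 hs ht ⟨p, 1 - p, hp0, by linarith, by ring, rfl⟩

end Refines

namespace IsDecoherence

variable {V : Type*} [AddCommGroup V] [Module ℝ V] {Ω : Set V} {D : V →ₗ[ℝ] V}

theorem map_eq_self_of_mem_image (hD : IsDecoherence Ω D) {x : V} (hx : x ∈ D '' Ω) :
    D x = x := by
  obtain ⟨y, hy, rfl⟩ := hx
  exact hD.2.1 y hy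

theorem refines_of_map_eq (hD : IsDecoherence Ω D) (hΩ : Convex ℝ Ω) {s x : V} (hs : s ∈ Ω)
    (hx : x ∈ D '' Ω) (hDs : D s = x) : Refines Ω s x := by
  have hxΩ : x ∈ Ω := hD.1 hx
  set ρ : V := (1 / 2 : ℝ) • s + (1 - 1 / 2 : ℝ) • x with hρ
  have hρΩ : ρ ∈ Ω := hΩ hs hxΩ (by norm_num) (by norm_num) (by norm_num)
  have hDρ : D ρ = x := by
    rw [hρ, map_add, map_smul, map_smul, hDs, hD.map_eq_self_of_mem_image hx, ← add_smul]
    norm_num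
  have hxρ : Refines Ω (D ρ) ρ := ⟨1 / 2, by norm_num, by norm_num, s, hs, by rw [hDρ]; module⟩
  have hρx : Refines Ω ρ x := hDρ ▸ hD.2.2 ρ hρΩ hxρ
  exact Refines.trans_s5 hΩ ⟨1 / 2, by norm_num, by norm_num, x, hxΩ, rfl⟩ hρx

end IsDecoherence

theorem decoheres_iff_mem_refSet_general {V : Type*} [NormedAddCommGroup V] [NormedSpace ℝ V]
    (Ω : Set V) (hconv : Convex ℝ Ω)
    (D : V →ₗ[ℝ] V) (hD : IsDecoherence Ω D)
    (si : V) (hsi : si ∈ (D '' Ω).extremePoints ℝ) :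
    ∀ s ∈ Ω, (D s = si ↔ s ∈ RefSet Ω si) := by
  intro s hs
  constructor
  · exact fun hDs => ⟨hs, hD.refines_of_map_eq hconv hs hsi.1 hDs⟩
  · rintro ⟨-, hrefines⟩
    have hDsi : Refines (D '' Ω) (D s) si := hD.map_eq_self_of_mem_image hsi.1 ▸ hrefines.map D
    exact hDsi.eq_of_mem_extremePoints (Set.mem_image_of_mem D hs) hsi

/-- for a decoherence map `D` on a nonempty compact convex set `Ω`
in a finite-dimensional space and an extreme point `sᵢ` of `D '' Ω`, a state
decoheres to `sᵢ` iff it lies in the refinement set of `sᵢ`. -/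
theorem decoheres_iff_mem_refSet {V : Type*} [NormedAddCommGroup V] [NormedSpace ℝ V]
    [FiniteDimensional ℝ V]
    (Ω : Set V) (hne : Ω.Nonempty) (hcomp : IsCompact Ω) (hconv : Convex ℝ Ω)
    (D : V →ₗ[ℝ] V) (hD : IsDecoherence Ω D)
    (si : V) (hsi : si ∈ (D '' Ω).extremePoints ℝ) :
    ∀ s ∈ Ω, (D s = si ↔ s ∈ RefSet Ω si) :=
  decoheres_iff_mem_refSet_general Ω hconv D hD si hsi
end

section
/- Let D be a decoherence map on a nonempty compact convex set Ω in a finite-dimensional real vector space V, let s_i be an extreme point of D(Ω), and let E : V → ℝ be a linear functional such that E(D(s)) = E(s) for all s ∈ Ω, E(s) ≥ 0 for all s ∈ Ω, and for all y ∈ D(Ω), E(y) = 0 if and only if y = s_i. Then for every s ∈ Ω: E(s) = 0 if and only if s ∈ Ref(s_i). In particular Ref(s_i) is an exposed face of Ω. -/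
/-- a linear functional `E` invariant under decoherence, nonnegative
on `Ω`, and vanishing on `D '' Ω` exactly at the extreme point `sᵢ`, vanishes on
`Ω` exactly on the refinement set of `sᵢ`; in particular `Ref(sᵢ)` is an exposed
face of `Ω`. -/
theorem refSet_exposed {V : Type*} [NormedAddCommGroup V] [NormedSpace ℝ V]
    [FiniteDimensional ℝ V]
    (Ω : Set V) (hne : Ω.Nonempty) (hcomp : IsCompact Ω) (hconv : Convex ℝ Ω)
    (D : V →ₗ[ℝ] V) (hD : IsDecoherence Ω D)
    (si : V) (hsi : si ∈ (D '' Ω).extremePoints ℝ)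
    (E : V →ₗ[ℝ] ℝ)
    (hED : ∀ s ∈ Ω, E (D s) = E s)
    (hEpos : ∀ s ∈ Ω, 0 ≤ E s)
    (hEzero : ∀ y ∈ D '' Ω, (E y = 0 ↔ y = si)) :
    ∀ s ∈ Ω, (E s = 0 ↔ s ∈ RefSet Ω si) := by

  obtain ⟨hDΩ, hidem, hpur⟩ := hD
  have hsiD : si ∈ D '' Ω := hsi.1
  have hsiΩ : si ∈ Ω := hDΩ hsiD
  have hEsi : E si = 0 := (hEzero si hsiD).mpr rfl
  have hDsi : D si = si := by
    obtain ⟨u, hu, hu'⟩ := hsiD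
    rw [← hu']; exact hidem u hu
  intro s hs
  constructor
  · intro hEs
    have hDs : D s = si :=
      (hEzero (D s) ⟨s, hs, rfl⟩).mp (by rw [hED s hs]; exact hEs)
    have hmΩ : (1/2 : ℝ) • s + (1/2 : ℝ) • si ∈ Ω :=
      hconv hs hsiΩ (by norm_num) (by norm_num) (by norm_num)
    have hDm : D ((1/2 : ℝ) • s + (1/2 : ℝ) • si) = si := by
      rw [map_add, map_smul, map_smul, hDs, hDsi]
      module
    have href : Refines Ω (D ((1/2 : ℝ) • s + (1/2 : ℝ) • si))
        ((1/2 : ℝ) • s + (1/2 : ℝ) • si) := by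
      refine ⟨1/2, by norm_num, by norm_num, s, hs, ?_⟩
      rw [hDm]; module
    obtain ⟨p, hp0, hp1, t, htΩ, heq⟩ := hpur _ hmΩ href
    rw [hDm] at heq
    have hc : (2 - p) ≠ 0 := by linarith
    refine ⟨hs, p / (2 - p), div_pos hp0 (by linarith), ?_, t, htΩ, ?_⟩
    · rw [div_le_one (by linarith)]; linarith
    · have key : si = ((2 - p)⁻¹ * (2 - p)) • si := by
        rw [inv_mul_cancel₀ hc, one_smul]
      rw [key, mul_smul]
      have key2 : (2 - p) • si = p • s + (2 - 2 * p) • t := by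
        linear_combination (norm := module) (2 : ℝ) • heq
      rw [key2, smul_add, smul_smul, smul_smul]
      congr 1
      · congr 1; field_simp
      · congr 1; field_simp; ring
  · rintro ⟨hsΩ, p, hp0, hp1, t, htΩ, heq⟩
    have h0 : p * E s + (1 - p) * E t = 0 := by
      have := hEsi
      rw [heq, map_add, map_smul, map_smul] at this
      simpa using this
    have h1 : p * E s = 0 := by
      nlinarith [mul_nonneg hp0.le (hEpos s hsΩ),
        mul_nonneg (by linarith : (0:ℝ) ≤ 1 - p) (hEpos t htΩ)]
    rcases mul_eq_zero.mp h1 with h | h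
    · exact absurd h (ne_of_gt hp0)
    · exact h
end

section
/- Let D be a decoherence map on a nonempty compact convex set Ω in a finite-dimensional real vector space V, let s₁, …, sₙ (n ≥ 1) be distinct extreme points of D(Ω), and suppose the convex hull C := convexHull{s₁, …, sₙ} is a face of D(Ω). Let m := (1/n) • (s₁ + ⋯ + sₙ). Then for every s ∈ Ω: D(s) ∈ C if and only if s ∈ Ref(m). -/
lemma refines_combo {V : Type*} [AddCommGroup V] [Module ℝ V] {Ω : Set V}
    (hconv : Convex ℝ Ω) (hne : Ω.Nonempty) {ι : Type*} [Fintype ι]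
    (f : ι → ℝ) (g : ι → V) (hf : ∀ i, 0 ≤ f i) (hg : ∀ i, g i ∈ Ω)
    (x y : V) (p : ℝ) (hp : 0 < p) (hsum : p + ∑ i, f i = 1)
    (hy : y = p • x + ∑ i, f i • g i) : Refines Ω x y := by
  have hf' : (0:ℝ) ≤ ∑ i, f i := Finset.sum_nonneg fun i _ => hf i
  have hp1 : p ≤ 1 := by linarith
  rcases eq_or_lt_of_le hf' with h0 | hpos
  · obtain ⟨t, ht⟩ := hne
    refine ⟨p, hp, hp1, t, ht, ?_⟩
    have hzero : ∀ i ∈ Finset.univ, f i • g i = (0:V) := by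
      intro i _
      have := (Finset.sum_eq_zero_iff_of_nonneg (fun i _ => hf i)).1 h0.symm i (Finset.mem_univ i)
      simp [this]
    have hp11 : (1:ℝ) - p = 0 := by rw [← h0] at hsum; linarith
    rw [hy, Finset.sum_eq_zero hzero, hp11, zero_smul]
  · refine ⟨p, hp, hp1, Finset.univ.centerMass f g,
      hconv.centerMass_mem (fun i _ => hf i) (by simpa using hpos) (fun i _ => hg i), ?_⟩
    rw [hy]
    congr 1
    rw [Finset.centerMass, smul_smul]
    have h1p : (1:ℝ) - p = ∑ i, f i := by linarith
    rw [h1p, mul_inv_cancel₀ (ne_of_gt hpos), one_smul]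

lemma hull_weights {V : Type*} [AddCommGroup V] [Module ℝ V] {n : ℕ}
    (s : Fin n → V) (hinj : Function.Injective s) (y : V)
    (hy : y ∈ convexHull ℝ (Set.range s)) :
    ∃ w : Fin n → ℝ, (∀ i, 0 ≤ w i) ∧ ∑ i, w i = 1 ∧ y = ∑ i, w i • s i := by
  classical
  have himg : Set.range s = ↑(Finset.univ.image s) := by
    simp [Finset.coe_image]
  rw [himg, Finset.convexHull_eq] at hy
  obtain ⟨W, hW0, hW1, hWc⟩ := hy
  refine ⟨fun i => W (s i), fun i => hW0 _ (Finset.mem_image_of_mem s (Finset.mem_univ i)), ?_, ?_⟩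
  · rw [← hW1, Finset.sum_image (fun a _ b _ h => hinj h)]
  · rw [← hWc, Finset.centerMass, hW1, inv_one, one_smul,
      Finset.sum_image (fun a _ b _ h => hinj h)]
    rfl

/-- if `C = conv{s₁,…,sₙ}` (the `sᵢ` distinct extreme points of
`D '' Ω`) is a face of `D '' Ω` and `m` is the uniform mixture of the `sᵢ`, then
a state decoheres into `C` iff it lies in `Ref(m)`. -/
theorem decoheres_into_face_iff_mem_refSet {V : Type*} [NormedAddCommGroup V]
    [NormedSpace ℝ V] [FiniteDimensional ℝ V]
    (Ω : Set V) (hne : Ω.Nonempty) (hcomp : IsCompact Ω) (hconv : Convex ℝ Ω)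
    (D : V →ₗ[ℝ] V) (hD : IsDecoherence Ω D)
    (n : ℕ) (hn : 1 ≤ n) (s : Fin n → V) (hinj : Function.Injective s)
    (hext : ∀ i, s i ∈ (D '' Ω).extremePoints ℝ)
    (C : Set V) (hC : C = convexHull ℝ (Set.range s))
    (hface : IsFaceOf C (D '' Ω))
    (m : V) (hm : m = (1 / (n : ℝ)) • ∑ i, s i) :
    ∀ x ∈ Ω, (D x ∈ C ↔ x ∈ RefSet Ω m) := by
  obtain ⟨hDΩ, hidem, hpure⟩ := hD
  have hn0 : ((n:ℝ)) ≠ 0 := Nat.cast_ne_zero.2 (by omega)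
  have hN1 : (1:ℝ) ≤ (n:ℝ) := by exact_mod_cast hn
  have hn1 : ((n:ℝ)) + 1 ≠ 0 := by positivity
  have hsC : ∀ i, s i ∈ C := fun i => hC ▸ subset_convexHull ℝ _ ⟨i, rfl⟩
  have hCD : C ⊆ D '' Ω := hface.1
  have hCfix : ∀ c ∈ C, D c = c := by
    intro c hc
    obtain ⟨v, hv, rfl⟩ := hCD hc
    exact hidem v hv
  have hCΩ : C ⊆ Ω := fun c hc => hDΩ (hCD hc)
  have hmC : m ∈ C := by
    rw [hC, hm, Finset.smul_sum]
    exact (convex_convexHull ℝ _).sum_mem (fun i _ => by positivity)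
      (by rw [Finset.sum_const]; simp; field_simp)
      (fun i _ => subset_convexHull ℝ _ ⟨i, rfl⟩)
  have hmΩ : m ∈ Ω := hCΩ hmC
  have hsΩ : ∀ i, s i ∈ Ω := fun i => hCΩ (hsC i)
  have hDm : D m = m := hCfix m hmC
  intro x hx
  constructor
  · -- forward: D x ∈ C → x ∈ RefSet Ω m
    intro hDxC
    obtain ⟨w, hw0, hw1, hwx⟩ := hull_weights s hinj (D x) (hC ▸ hDxC)
    have hwle : ∀ i, w i ≤ 1 := by
      intro i
      calc w i ≤ ∑ j, w j := Finset.single_le_sum (fun j _ => hw0 j) (Finset.mem_univ i)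
        _ = 1 := hw1
    set ρ := (2⁻¹:ℝ) • x + (2⁻¹:ℝ) • m with hρdef
    have hρΩ : ρ ∈ Ω := hconv hx hmΩ (by norm_num) (by norm_num) (by norm_num)
    have hDρ : D ρ = (2⁻¹:ℝ) • (∑ i, w i • s i) + (2⁻¹:ℝ) • m := by
      rw [hρdef, map_add, map_smul, map_smul, hwx, hDm]
    have hc' : ∑ i, ((1 - w i)/(2*((n:ℝ)+1))) • s i
        = (2*((n:ℝ)+1))⁻¹ • (∑ i, s i) - (2*((n:ℝ)+1))⁻¹ • (∑ i, w i • s i) := by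
      rw [Finset.smul_sum, Finset.smul_sum, ← Finset.sum_sub_distrib]
      exact Finset.sum_congr rfl fun i _ => by rw [smul_smul]; match_scalars; ring
    have claim1 : Refines Ω (D ρ) ρ := by
      refine refines_combo hconv hne
        (fun o : Option (Fin n) => o.elim 2⁻¹ (fun i => (1 - w i)/(2*((n:ℝ)+1))))
        (fun o => o.elim x s) ?_ ?_ (D ρ) ρ ((n:ℝ)+1)⁻¹ (by positivity) ?_ ?_
      · intro o
        cases o with
        | none => norm_num
        | some i => exact div_nonneg (by linarith [hwle i]) (by positivity)
      · intro o
        cases o with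
        | none => exact hx
        | some i => exact hsΩ i
      · rw [Fintype.sum_option]
        simp only [Option.elim]
        have hsw : ∑ i, (1 - w i)/(2*((n:ℝ)+1)) = ((n:ℝ) - 1)/(2*((n:ℝ)+1)) := by
          rw [← Finset.sum_div, Finset.sum_sub_distrib, Finset.sum_const, hw1]
          simp
        rw [hsw]
        field_simp
        ring
      · rw [Fintype.sum_option]
        simp only [Option.elim]
        rw [hDρ, hρdef, hm, hc']
        match_scalars <;> field_simp <;> ring
    obtain ⟨q, hq0, hq1, u, huΩ, hqe⟩ := hpure ρ hρΩ claim1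
    have he' : ∑ i, ((1 - w i)/((n:ℝ)+1)) • s i
        = ((n:ℝ)+1)⁻¹ • (∑ i, s i) - ((n:ℝ)+1)⁻¹ • (∑ i, w i • s i) := by
      rw [Finset.smul_sum, Finset.smul_sum, ← Finset.sum_sub_distrib]
      exact Finset.sum_congr rfl fun i _ => by rw [smul_smul]; match_scalars; ring
    have claim2 : m = (2/((n:ℝ)+1)) • D ρ + ∑ i, ((1 - w i)/((n:ℝ)+1)) • s i := by
      rw [hDρ, hm, he']
      match_scalars <;> field_simp <;> ring
    have star : m = (2/((n:ℝ)+1)) • (q • ((2⁻¹:ℝ) • x + (2⁻¹:ℝ) • m) + (1-q) • u)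
        + ∑ i, ((1 - w i)/((n:ℝ)+1)) • s i := by
      rw [← hρdef, ← hqe]
      exact claim2
    have hB : 0 < 1 - q/((n:ℝ)+1) := by
      have h1 : q/((n:ℝ)+1) ≤ 1/2 := by
        rw [div_le_div_iff₀ (by positivity) (by norm_num)]
        linarith
      linarith
    have hβm : (1 - q/((n:ℝ)+1)) • m = (q/((n:ℝ)+1)) • x
        + ((2/((n:ℝ)+1))*(1-q)) • u + ∑ i, ((1 - w i)/((n:ℝ)+1)) • s i := by
      rw [sub_smul, one_smul]
      nth_rewrite 1 [star]
      match_scalars <;> field_simp <;> ring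
    refine Set.mem_sep hx ?_
    refine refines_combo hconv hne
      (fun o : Option (Fin n) => o.elim ((1 - q/((n:ℝ)+1))⁻¹ * ((2/((n:ℝ)+1))*(1-q)))
        (fun i => (1 - q/((n:ℝ)+1))⁻¹ * ((1 - w i)/((n:ℝ)+1))))
      (fun o => o.elim u s) ?_ ?_ x m ((1 - q/((n:ℝ)+1))⁻¹ * (q/((n:ℝ)+1)))
      (mul_pos (inv_pos.2 hB) (div_pos hq0 (by positivity))) ?_ ?_
    · intro o
      cases o with
      | none =>
        exact mul_nonneg (inv_nonneg.2 hB.le)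
          (mul_nonneg (by positivity) (by linarith))
      | some i =>
        exact mul_nonneg (inv_nonneg.2 hB.le)
          (div_nonneg (by linarith [hwle i]) (by positivity))
    · intro o
      cases o with
      | none => exact huΩ
      | some i => exact hsΩ i
    · rw [Fintype.sum_option]
      simp only [Option.elim]
      have hsw : ∑ i, (1 - q/((n:ℝ)+1))⁻¹ * ((1 - w i)/((n:ℝ)+1))
          = (1 - q/((n:ℝ)+1))⁻¹ * (((n:ℝ) - 1)/((n:ℝ)+1)) := by
        rw [← Finset.mul_sum, ← Finset.sum_div, Finset.sum_sub_distrib, Finset.sum_const, hw1]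
        simp
      rw [hsw]
      have hBval : q/((n:ℝ)+1) + (2/((n:ℝ)+1)*(1-q) + ((n:ℝ)-1)/((n:ℝ)+1))
          = 1 - q/((n:ℝ)+1) := by field_simp; ring
      rw [← mul_add, ← mul_add, hBval, inv_mul_cancel₀ hB.ne']
    · rw [Fintype.sum_option]
      simp only [Option.elim]
      have hm' : m = (1 - q/((n:ℝ)+1))⁻¹ • ((1 - q/((n:ℝ)+1)) • m) := by
        rw [smul_smul, inv_mul_cancel₀ hB.ne', one_smul]
      nth_rewrite 1 [hm']
      rw [hβm]
      have hsum2 : ∑ i, ((1 - q/((n:ℝ)+1))⁻¹ * ((1 - w i)/((n:ℝ)+1))) • s i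
          = (1 - q/((n:ℝ)+1))⁻¹ • ∑ i, ((1 - w i)/((n:ℝ)+1)) • s i := by
        rw [Finset.smul_sum]
        exact Finset.sum_congr rfl fun i _ => (smul_smul _ _ _).symm
      rw [hsum2]
      match_scalars <;> ring
  · -- reverse
    rintro ⟨hxΩ, p, hp0, hp1, t, htΩ, hmeq⟩
    have hDeq : m = p • D x + (1 - p) • D t := by
      conv_lhs => rw [← hDm, hmeq]
      rw [map_add, map_smul, map_smul]
    exact hface.2.2 m hmC (D x) ⟨x, hx, rfl⟩ ⟨p, hp0, hp1, D t, ⟨t, htΩ, rfl⟩, hDeq⟩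
end

section
/- Let D be a decoherence map on a nonempty compact convex set Ω in a finite-dimensional real vector space V. Then D maps the intrinsic (relative) interior of Ω into itself: if ρ lies in the intrinsic interior of Ω then so does D(ρ). Consequently, every face F of Ω with D(Ω) ⊆ F satisfies F = Ω. -/
/-!
A point `ρ` of the intrinsic interior of `Ω` is refined by every `s ∈ Ω`: pushing `ρ` slightly
beyond itself, away from `s`, stays inside `Ω`, and `ρ` is a proper convex combination of `s`
and that point. Moreover, anything refined by an intrinsic interior point is again intrinsic
interior. So by purity-decrease, `D ρ` (which refines `ρ`) is refined by `ρ`, hence intrinsic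
interior. A face containing `D '' Ω` contains an intrinsic interior point, which every point
of `Ω` refines.
-/

open Filter Topology

section IntrinsicInterior

variable {V : Type*} [AddCommGroup V] [Module ℝ V] [TopologicalSpace V] {Ω : Set V}

theorem mem_intrinsicInterior_iff_eventually {ρ : V} :
    ρ ∈ intrinsicInterior ℝ Ω ↔
      ρ ∈ affineSpan ℝ Ω ∧ ∀ᶠ y in 𝓝 ρ, y ∈ affineSpan ℝ Ω → y ∈ Ω := by
  rw [mem_intrinsicInterior]
  constructor
  · rintro ⟨y, hy, rfl⟩
    rw [mem_interior_iff_mem_nhds, nhds_induced, mem_comap] at hy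
    obtain ⟨U, hU, hUsub⟩ := hy
    exact ⟨y.2, mem_of_superset hU fun z hz hzspan =>
      hUsub (show (⟨z, hzspan⟩ : affineSpan ℝ Ω) ∈ _ from hz)⟩
  · rintro ⟨hρ, h⟩
    refine ⟨⟨ρ, hρ⟩, ?_, rfl⟩
    rw [mem_interior_iff_mem_nhds, nhds_induced, mem_comap]
    exact ⟨_, h, fun z hz => hz z.2⟩

variable [IsTopologicalAddGroup V] [ContinuousSMul ℝ V]

theorem refines_of_mem_intrinsicInterior {ρ s : V} (hρ : ρ ∈ intrinsicInterior ℝ Ω)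
    (hs : s ∈ Ω) : Refines Ω s ρ := by
  obtain ⟨hspan, hev⟩ := mem_intrinsicInterior_iff_eventually.1 hρ
  set ray : ℝ → V := fun ε => AffineMap.lineMap s ρ (1 + ε) with hray
  have hray_tendsto : Tendsto ray (𝓝[>] 0) (𝓝 ρ) := by
    have : Continuous ray := AffineMap.lineMap_continuous.comp (continuous_const.add continuous_id)
    simpa [ray] using (this.tendsto 0).mono_left nhdsWithin_le_nhds
  have hray_span : ∀ ε, ray ε ∈ affineSpan ℝ Ω := fun ε =>
    AffineMap.lineMap_mem _ (subset_affineSpan ℝ Ω hs) hspan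
  obtain ⟨ε, hεΩ, hε⟩ : ∃ ε, ray ε ∈ Ω ∧ 0 < ε :=
    ((hray_tendsto.eventually hev).and self_mem_nhdsWithin).exists.imp
      fun ε h => ⟨h.1 (hray_span ε), h.2⟩
  refine ⟨ε / (1 + ε), by positivity, (div_le_one (by positivity)).2 (by linarith),
    ray ε, hεΩ, ?_⟩
  simp only [hray, AffineMap.lineMap_apply_module]
  match_scalars <;> field_simp <;> ring

theorem Refines.mem_intrinsicInterior (hconv : Convex ℝ Ω) {ρ x : V} (h : Refines Ω ρ x)
    (hρ : ρ ∈ intrinsicInterior ℝ Ω) : x ∈ intrinsicInterior ℝ Ω := by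
  obtain ⟨p, hp0, hp1, t, ht, rfl⟩ := h
  obtain ⟨hspan, hev⟩ := mem_intrinsicInterior_iff_eventually.1 hρ
  have hx : p • ρ + (1 - p) • t = AffineMap.lineMap t ρ p := by
    rw [AffineMap.lineMap_apply_module]; module
  set unscale : V → V := fun z => AffineMap.lineMap t z p⁻¹ with hunscale
  have hunscale_x : unscale (p • ρ + (1 - p) • t) = ρ := by
    simp only [hunscale, AffineMap.lineMap_apply_module]
    match_scalars <;> field_simp
    ring
  have hunscale_tendsto : Tendsto unscale (𝓝 (p • ρ + (1 - p) • t)) (𝓝 ρ) := by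
    have : Continuous unscale := by
      simp only [hunscale, AffineMap.lineMap_apply_module]; fun_prop
    simpa [hunscale_x] using this.tendsto (p • ρ + (1 - p) • t)
  rw [mem_intrinsicInterior_iff_eventually, hx]
  refine ⟨AffineMap.lineMap_mem _ (subset_affineSpan ℝ Ω ht) hspan, ?_⟩
  rw [← hx]
  filter_upwards [hunscale_tendsto.eventually hev] with z hz hzspan
  have hz_eq : z = p • unscale z + (1 - p) • t := by
    simp only [hunscale, AffineMap.lineMap_apply_module]
    match_scalars <;> field_simp
    ring
  rw [hz_eq]
  exact hconv (hz (AffineMap.lineMap_mem _ (subset_affineSpan ℝ Ω ht) hzspan)) ht hp0.le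
    (by linarith) (by ring)

theorem IsFaceOf.eq_of_mem_intrinsicInterior {F : Set V} (hF : IsFaceOf F Ω) {ρ : V}
    (hρF : ρ ∈ F) (hρ : ρ ∈ intrinsicInterior ℝ Ω) : F = Ω :=
  hF.1.antisymm fun s hs => hF.2.2 ρ hρF s hs (refines_of_mem_intrinsicInterior hρ hs)

end IntrinsicInterior

theorem IsDecoherence.mapsTo_intrinsicInterior {V : Type*} [AddCommGroup V] [Module ℝ V]
    [TopologicalSpace V] [IsTopologicalAddGroup V] [ContinuousSMul ℝ V] {Ω : Set V}
    (hconv : Convex ℝ Ω) {D : V →ₗ[ℝ] V} (hD : IsDecoherence Ω D) {ρ : V}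
    (hρ : ρ ∈ intrinsicInterior ℝ Ω) : D ρ ∈ intrinsicInterior ℝ Ω := by
  have hρΩ : ρ ∈ Ω := intrinsicInterior_subset hρ
  have hDρ_refines : Refines Ω (D ρ) ρ :=
    refines_of_mem_intrinsicInterior hρ (hD.1 ⟨ρ, hρΩ, rfl⟩)
  exact (hD.2.2 ρ hρΩ hDρ_refines).mem_intrinsicInterior hconv hρ

theorem decoherence_preserves_intrinsicInterior_general {V : Type*} [NormedAddCommGroup V]
    [NormedSpace ℝ V] [FiniteDimensional ℝ V]
    (Ω : Set V) (hne : Ω.Nonempty) (hconv : Convex ℝ Ω)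
    (D : V →ₗ[ℝ] V) (hD : IsDecoherence Ω D) :
    (∀ ρ ∈ intrinsicInterior ℝ Ω, D ρ ∈ intrinsicInterior ℝ Ω) ∧
    (∀ F : Set V, IsFaceOf F Ω → D '' Ω ⊆ F → F = Ω) := by
  refine ⟨fun ρ hρ => hD.mapsTo_intrinsicInterior hconv hρ, fun F hF hDF => ?_⟩
  obtain ⟨ρ, hρ⟩ := hne.intrinsicInterior hconv
  exact hF.eq_of_mem_intrinsicInterior (hDF ⟨ρ, intrinsicInterior_subset hρ, rfl⟩)
    (hD.mapsTo_intrinsicInterior hconv hρ)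

/-- a decoherence map sends the intrinsic (relative) interior of
`Ω` into itself; consequently every face of `Ω` containing `D '' Ω` is all
of `Ω`. -/
theorem decoherence_preserves_intrinsicInterior {V : Type*} [NormedAddCommGroup V]
    [NormedSpace ℝ V] [FiniteDimensional ℝ V]
    (Ω : Set V) (hne : Ω.Nonempty) (hcomp : IsCompact Ω) (hconv : Convex ℝ Ω)
    (D : V →ₗ[ℝ] V) (hD : IsDecoherence Ω D) :
    (∀ ρ ∈ intrinsicInterior ℝ Ω, D ρ ∈ intrinsicInterior ℝ Ω) ∧
    (∀ F : Set V, IsFaceOf F Ω → D '' Ω ⊆ F → F = Ω) :=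
  decoherence_preserves_intrinsicInterior_general Ω hne hconv D hD
end

section
/- The minimal tensor product of convex cones distributes over the direct sum: let U, V, W be real vector spaces and K_A ⊆ U, K_B ⊆ V, K_C ⊆ W convex cones. Under the canonical linear equivalence U ⊗ (V × W) ≃ (U ⊗ V) × (U ⊗ W) (sending u ⊗ (v, w) to (u ⊗ v, u ⊗ w)), the cone K_A ⊠ (K_B × K_C) = convexHull{a ⊗ (b, c) | a ∈ K_A, b ∈ K_B, c ∈ K_C} is mapped onto the product cone (K_A ⊠ K_B) × (K_A ⊠ K_C). -/
open TensorProduct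

/-- A convex cone: a convex set containing `0` and closed under nonnegative scaling. -/
def IsConvexCone {V : Type*} [AddCommGroup V] [Module ℝ V] (K : Set V) : Prop :=
  Convex ℝ K ∧ (0 : V) ∈ K ∧ ∀ c : ℝ, 0 ≤ c → ∀ x ∈ K, c • x ∈ K

/-- The minimal tensor product of two sets of states/cones. -/
def MinTensor {V W : Type*} [AddCommGroup V] [Module ℝ V] [AddCommGroup W] [Module ℝ W]
    (S : Set V) (T : Set W) : Set (TensorProduct ℝ V W) :=
  convexHull ℝ {z | ∃ a ∈ S, ∃ b ∈ T, z = a ⊗ₜ[ℝ] b}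

/-- Convex hull of a set closed under nonnegative scaling is closed under addition. -/
lemma convexHull_add_mem {V : Type*} [AddCommGroup V] [Module ℝ V] {s : Set V}
    (hs : ∀ c : ℝ, 0 ≤ c → ∀ x ∈ s, c • x ∈ s)
    {x y : V} (hx : x ∈ convexHull ℝ s) (hy : y ∈ convexHull ℝ s) :
    x + y ∈ convexHull ℝ s := by
  have hmid : (1/2 : ℝ) • x + (1/2 : ℝ) • y ∈ convexHull ℝ s :=
    (convex_convexHull ℝ s) hx hy (by norm_num) (by norm_num) (by norm_num)
  have h2 : (2 : ℝ) • ((1/2 : ℝ) • x + (1/2 : ℝ) • y) ∈ convexHull ℝ s := by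
    have := (LinearMap.lsmul ℝ V 2).image_convexHull s
    have hmem : (2:ℝ) • ((1/2 : ℝ) • x + (1/2 : ℝ) • y) ∈
        (LinearMap.lsmul ℝ V 2) '' convexHull ℝ s := ⟨_, hmid, rfl⟩
    rw [this] at hmem
    refine convexHull_mono ?_ hmem
    rintro z ⟨w, hw, rfl⟩
    exact hs 2 (by norm_num) w hw
  have : (2 : ℝ) • ((1/2 : ℝ) • x + (1/2 : ℝ) • y) = x + y := by
    rw [smul_add, smul_smul, smul_smul]; norm_num
  rwa [this] at h2

/-- the minimal tensor product distributes over the direct sum: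
under the canonical equivalence `U ⊗ (V × W) ≃ (U ⊗ V) × (U ⊗ W)`, the cone
`K_A ⊠ (K_B × K_C)` is mapped onto `(K_A ⊠ K_B) × (K_A ⊠ K_C)`. -/
theorem minTensor_distrib_directSum {U V W : Type*}
    [AddCommGroup U] [Module ℝ U] [AddCommGroup V] [Module ℝ V]
    [AddCommGroup W] [Module ℝ W]
    (KA : Set U) (KB : Set V) (KC : Set W)
    (hKA : IsConvexCone KA) (hKB : IsConvexCone KB) (hKC : IsConvexCone KC)
    (e : TensorProduct ℝ U (V × W) ≃ₗ[ℝ] (TensorProduct ℝ U V) × (TensorProduct ℝ U W))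
    (he : ∀ (u : U) (vw : V × W), e (u ⊗ₜ[ℝ] vw) = (u ⊗ₜ[ℝ] vw.1, u ⊗ₜ[ℝ] vw.2)) :
    e '' MinTensor KA (KB ×ˢ KC) = (MinTensor KA KB) ×ˢ (MinTensor KA KC) := by
  set T : Set (TensorProduct ℝ U (V × W)) :=
    {z | ∃ a ∈ KA, ∃ b ∈ KB ×ˢ KC, z = a ⊗ₜ[ℝ] b} with hT
  have himg : e '' MinTensor KA (KB ×ˢ KC) = convexHull ℝ (e '' T) :=
    e.toLinearMap.image_convexHull T
  -- the image set is closed under nonneg scaling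
  have hscale : ∀ c : ℝ, 0 ≤ c → ∀ x ∈ (e '' T), c • x ∈ (e '' T) := by
    rintro c hc _ ⟨z, ⟨a, ha, bc, hbc, rfl⟩, rfl⟩
    refine ⟨(c • a) ⊗ₜ[ℝ] bc, ⟨c • a, hKA.2.2 c hc a ha, bc, hbc, rfl⟩, ?_⟩
    rw [← TensorProduct.smul_tmul', map_smul]
  rw [himg]
  apply Set.Subset.antisymm
  · apply convexHull_min
    · rintro _ ⟨z, ⟨a, ha, ⟨b, c⟩, ⟨hb, hc⟩, rfl⟩, rfl⟩
      rw [he]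
      exact ⟨subset_convexHull ℝ _ ⟨a, ha, b, hb, rfl⟩,
        subset_convexHull ℝ _ ⟨a, ha, c, hc, rfl⟩⟩
    · exact (convex_convexHull ℝ _).prod (convex_convexHull ℝ _)
  · rintro ⟨x, y⟩ ⟨hx, hy⟩
    have hxl : ((x, 0) : (TensorProduct ℝ U V) × (TensorProduct ℝ U W)) ∈
        convexHull ℝ (e '' T) := by
      have := (LinearMap.inl ℝ (TensorProduct ℝ U V) (TensorProduct ℝ U W)).image_convexHull
        {z | ∃ a ∈ KA, ∃ b ∈ KB, z = a ⊗ₜ[ℝ] b}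
      have hmem : ((x, 0) : (TensorProduct ℝ U V) × (TensorProduct ℝ U W)) ∈
          (LinearMap.inl ℝ _ _) '' MinTensor KA KB := ⟨x, hx, rfl⟩
      rw [MinTensor, this] at hmem
      refine convexHull_mono ?_ hmem
      rintro _ ⟨_, ⟨a, ha, b, hb, rfl⟩, rfl⟩
      exact ⟨a ⊗ₜ[ℝ] (b, 0), ⟨a, ha, (b, 0), ⟨hb, hKC.2.1⟩, rfl⟩, by simp [he]⟩
    have hyr : ((0, y) : (TensorProduct ℝ U V) × (TensorProduct ℝ U W)) ∈
        convexHull ℝ (e '' T) := by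
      have := (LinearMap.inr ℝ (TensorProduct ℝ U V) (TensorProduct ℝ U W)).image_convexHull
        {z | ∃ a ∈ KA, ∃ b ∈ KC, z = a ⊗ₜ[ℝ] b}
      have hmem : ((0, y) : (TensorProduct ℝ U V) × (TensorProduct ℝ U W)) ∈
          (LinearMap.inr ℝ _ _) '' MinTensor KA KC := ⟨y, hy, rfl⟩
      rw [MinTensor, this] at hmem
      refine convexHull_mono ?_ hmem
      rintro _ ⟨_, ⟨a, ha, c, hc, rfl⟩, rfl⟩
      exact ⟨a ⊗ₜ[ℝ] (0, c), ⟨a, ha, (0, c), ⟨hKB.2.1, hc⟩, rfl⟩, by simp [he]⟩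
    have := convexHull_add_mem hscale hxl hyr
    simpa using this
end

section
/- Let Ω ⊆ V be a convex set in a real vector space, and let E₁, Ẽ, Eₙ : V → ℝ be linear functionals, each nonnegative on Ω, with zero sets f₁ := {s ∈ Ω | E₁(s) = 0}, f̃ := {s ∈ Ω | Ẽ(s) = 0}, fₙ := {s ∈ Ω | Eₙ(s) = 0}, and suppose f₁ ∩ fₙ = ∅ and f̃ ∩ fₙ = ∅. Define the linear functional e := Eₙ ⊗ Ẽ + E₁ ⊗ Eₙ on V ⊗ V. Then e is nonnegative on the minimal tensor product Ω ⊠ Ω, and {w ∈ Ω ⊠ Ω | e(w) = 0} = convexHull( {a ⊗ b | a ∈ f₁, b ∈ f̃} ∪ {a ⊗ b | a ∈ fₙ, b ∈ fₙ} ). -/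
open TensorProduct

/-- given linear functionals `E₁, Ẽ, Eₙ` nonnegative on `Ω` with
zero sets `f₁, f̃, fₙ` satisfying `f₁ ∩ fₙ = ∅` and `f̃ ∩ fₙ = ∅`, the functional
`e = Eₙ ⊗ Ẽ + E₁ ⊗ Eₙ` on `V ⊗ V` is nonnegative on `Ω ⊠ Ω` and its zero set
there is `conv({a ⊗ b | a ∈ f₁, b ∈ f̃} ∪ {a ⊗ b | a ∈ fₙ, b ∈ fₙ})`. -/
theorem exposing_functional_on_minTensor {V : Type*} [AddCommGroup V] [Module ℝ V]
    (Ω : Set V) (hΩ : Convex ℝ Ω)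
    (E₁ Et En : V →ₗ[ℝ] ℝ)
    (hE₁pos : ∀ s ∈ Ω, 0 ≤ E₁ s) (hEtpos : ∀ s ∈ Ω, 0 ≤ Et s) (hEnpos : ∀ s ∈ Ω, 0 ≤ En s)
    (f₁ ft fn : Set V)
    (hf₁ : f₁ = {s ∈ Ω | E₁ s = 0}) (hft : ft = {s ∈ Ω | Et s = 0})
    (hfn : fn = {s ∈ Ω | En s = 0})
    (hdisj₁ : f₁ ∩ fn = ∅) (hdisjt : ft ∩ fn = ∅)
    (e : TensorProduct ℝ V V →ₗ[ℝ] ℝ)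
    (he : ∀ a b : V, e (a ⊗ₜ[ℝ] b) = En a * Et b + E₁ a * En b) :
    (∀ w ∈ MinTensor Ω Ω, 0 ≤ e w) ∧
    {w ∈ MinTensor Ω Ω | e w = 0} =
      convexHull ℝ ({z | ∃ a ∈ f₁, ∃ b ∈ ft, z = a ⊗ₜ[ℝ] b} ∪
        {z | ∃ a ∈ fn, ∃ b ∈ fn, z = a ⊗ₜ[ℝ] b}) := by
  -- e is nonnegative on pure tensors from Ω × Ω
  have hgen : ∀ z ∈ {z | ∃ a ∈ Ω, ∃ b ∈ Ω, z = a ⊗ₜ[ℝ] b}, 0 ≤ e z := by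
    rintro z ⟨a, ha, b, hb, rfl⟩
    rw [he]
    have := hEnpos a ha; have := hEtpos b hb; have := hE₁pos a ha; have := hEnpos b hb
    positivity
  have hpos : ∀ w ∈ MinTensor Ω Ω, 0 ≤ e w := by
    intro w hw
    have hconv : Convex ℝ {w : TensorProduct ℝ V V | 0 ≤ e w} := by
      intro x hx y hy a b ha hb hab
      simp only [Set.mem_setOf_eq, map_add, map_smul, smul_eq_mul] at *
      have := mul_nonneg ha hx; have := mul_nonneg hb hy; linarith
    exact convexHull_min hgen hconv hw
  refine ⟨hpos, Set.Subset.antisymm ?_ ?_⟩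
  · -- zero set ⊆ hull
    rintro w ⟨hw, hw0⟩
    rw [MinTensor, convexHull_eq] at hw
    obtain ⟨ι, t, wt, z, hw₀, hw₁, hz, rfl⟩ := hw
    have hcm : t.centerMass wt z = ∑ i ∈ t, wt i • z i :=
      Finset.centerMass_eq_of_sum_1 _ _ hw₁
    have hsum : ∑ i ∈ t, wt i * e (z i) = 0 := by
      rw [hcm] at hw0
      simpa [map_sum] using hw0
    have hterm : ∀ i ∈ t, wt i ≠ 0 → e (z i) = 0 := by
      intro i hi hwi
      have h0 : ∀ i ∈ t, 0 ≤ wt i * e (z i) := fun j hj =>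
        mul_nonneg (hw₀ j hj) (hgen _ (hz j hj))
      have := (Finset.sum_eq_zero_iff_of_nonneg h0).mp hsum i hi
      rcases mul_eq_zero.mp this with h | h
      · exact absurd h hwi
      · exact h
    -- restrict to nonzero weights
    rw [← Finset.centerMass_filter_ne_zero (w := wt) z]
    apply Finset.centerMass_mem_convexHull
    · intro i hi; exact hw₀ i (Finset.mem_filter.mp hi).1
    · rw [Finset.sum_filter_ne_zero, hw₁]; exact one_pos
    · intro i hi
      obtain ⟨hit, hwi⟩ := Finset.mem_filter.mp hi
      obtain ⟨a, ha, b, hb, hzi⟩ := hz i hit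
      have hez : e (z i) = 0 := hterm i hit hwi
      rw [hzi, he] at hez
      have h1 : 0 ≤ En a * Et b := mul_nonneg (hEnpos a ha) (hEtpos b hb)
      have h2 : 0 ≤ E₁ a * En b := mul_nonneg (hE₁pos a ha) (hEnpos b hb)
      have h1' : En a * Et b = 0 := by linarith
      have h2' : E₁ a * En b = 0 := by linarith
      by_cases hEa : En a = 0
      · -- a ∈ fn, so a ∉ f₁, so E₁ a ≠ 0, so En b = 0
        have hafn : a ∈ fn := by rw [hfn]; exact ⟨ha, hEa⟩
        have hE₁a : E₁ a ≠ 0 := by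
          intro h
          have : a ∈ f₁ ∩ fn := ⟨by rw [hf₁]; exact ⟨ha, h⟩, hafn⟩
          rw [hdisj₁] at this; exact this
        have hEnb : En b = 0 := by
          rcases mul_eq_zero.mp h2' with h | h
          · exact absurd h hE₁a
          · exact h
        exact Or.inr ⟨a, hafn, b, by rw [hfn]; exact ⟨hb, hEnb⟩, hzi⟩
      · have hEtb : Et b = 0 := by
          rcases mul_eq_zero.mp h1' with h | h
          · exact absurd h hEa
          · exact h
        have hbft : b ∈ ft := by rw [hft]; exact ⟨hb, hEtb⟩
        have hEnb : En b ≠ 0 := by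
          intro h
          have : b ∈ ft ∩ fn := ⟨hbft, by rw [hfn]; exact ⟨hb, h⟩⟩
          rw [hdisjt] at this; exact this
        have hE₁a : E₁ a = 0 := by
          rcases mul_eq_zero.mp h2' with h | h
          · exact h
          · exact absurd h hEnb
        exact Or.inl ⟨a, by rw [hf₁]; exact ⟨ha, hE₁a⟩, b, hbft, hzi⟩
  · -- hull ⊆ zero set
    intro w hw
    have hsub1 : f₁ ⊆ Ω := by rw [hf₁]; exact Set.sep_subset _ _
    have hsubt : ft ⊆ Ω := by rw [hft]; exact Set.sep_subset _ _
    have hsubn : fn ⊆ Ω := by rw [hfn]; exact Set.sep_subset _ _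
    constructor
    · apply convexHull_mono ?_ hw
      rintro z (⟨a, ha, b, hb, rfl⟩ | ⟨a, ha, b, hb, rfl⟩)
      · exact ⟨a, hsub1 ha, b, hsubt hb, rfl⟩
      · exact ⟨a, hsubn ha, b, hsubn hb, rfl⟩
    · -- e = 0 on the hull: {w | e w = 0} is convex and contains the generators
      have hconv : Convex ℝ {w : TensorProduct ℝ V V | e w = 0} := by
        intro x hx y hy a b _ _ _
        simp only [Set.mem_setOf_eq, map_add, map_smul, smul_eq_mul] at *
        rw [hx, hy]; ring
      apply convexHull_min ?_ hconv hw
      rintro z (⟨a, ha, b, hb, rfl⟩ | ⟨a, ha, b, hb, rfl⟩)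
      · rw [hf₁] at ha; rw [hft] at hb
        simp [he, ha.2, hb.2]
      · rw [hfn] at ha hb
        simp [he, ha.2, hb.2]
end

section
/- Let V be a finite-dimensional real vector space and let A, B, C be linear subspaces of V with A not contained in B. For subspaces X, Y of V write X ⊗ Y for the subspace of V ⊗ V spanned by {x ⊗ y | x ∈ X, y ∈ Y}. Suppose there exists a linear automorphism T of V ⊗ V such that T maps the subspace A ⊗ B onto B ⊗ B and maps the subspace A ⊗ C onto A ⊗ C. Then B ∩ C = {0}. -/
open TensorProduct

/-- The subspace of `V ⊗ V` spanned by elementary tensors `x ⊗ y` with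
`x ∈ X`, `y ∈ Y`. -/
def tensorSub {V : Type*} [AddCommGroup V] [Module ℝ V] (X Y : Submodule ℝ V) :
    Submodule ℝ (TensorProduct ℝ V V) :=
  Submodule.span ℝ {z | ∃ x ∈ X, ∃ y ∈ Y, z = x ⊗ₜ[ℝ] y}

/-!
`T` carries `A ⊗ (B ∩ C)` into `(B ⊗ B) ∩ (A ⊗ C) = (A ∩ B) ⊗ (B ∩ C)`, so
`dim A · dim (B ∩ C) ≤ dim (A ∩ B) · dim (B ∩ C)`; as `A ⊄ B` gives `dim (A ∩ B) < dim A`,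
this forces `B ∩ C = 0`.

The intersection formula `(X ⊗ Y) ∩ (X' ⊗ Y') = (X ∩ X') ⊗ (Y ∩ Y')` holds because, in each
factor, some linear map fixes `X` pointwise and sends `X'` into `X ∩ X'`: the tensor product of
two such maps fixes `X ⊗ Y` and sends `X' ⊗ Y'` into `(X ∩ X') ⊗ (Y ∩ Y')`.
-/

theorem Submodule.exists_fixing_linearMap_mapsTo_inf {K V : Type*} [DivisionRing K]
    [AddCommGroup V] [Module K V] (X X' : Submodule K V) :
    ∃ p : V →ₗ[K] V, (∀ x ∈ X, p x = x) ∧ ∀ x ∈ X', p x ∈ X ⊓ X' := by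
  obtain ⟨X₁, hdisj, hsup⟩ :=
    IsModularLattice.exists_disjoint_and_sup_eq (inf_le_right : X ⊓ X' ≤ X')
  have hX₁X : Disjoint X₁ X := by
    rw [disjoint_iff, ← inf_eq_left.2 (hsup ▸ le_sup_right : X₁ ≤ X'), inf_assoc, inf_comm X',
      hdisj.symm.eq_bot]
  obtain ⟨W, hX₁W, hW⟩ := hX₁X.exists_isCompl
  refine ⟨X.projection W hW.symm, fun x hx => X.projection_apply_of_mem_left hW.symm hx,
    fun x hx => ?_⟩
  -- `X' = (X ⊓ X') ⊔ X₁`, and the projection onto `X` along `W ⊇ X₁` kills `X₁`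
  rw [← hsup] at hx
  obtain ⟨u, hu, w, hw, rfl⟩ := Submodule.mem_sup.1 hx
  rw [map_add, X.projection_apply_of_mem_left hW.symm hu.1,
    X.projection_apply_of_mem_right hW.symm (hX₁W hw), add_zero]
  exact hu

section tensorSub

variable {V : Type*} [AddCommGroup V] [Module ℝ V]

theorem tensorSub_mono {X X' Y Y' : Submodule ℝ V} (hX : X ≤ X') (hY : Y ≤ Y') :
    tensorSub X Y ≤ tensorSub X' Y' :=
  Submodule.span_mono fun _ ⟨x, hx, y, hy, hz⟩ => ⟨x, hX hx, y, hY hy, hz⟩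

theorem map_tensorSub_le {X Y X' Y' : Submodule ℝ V} {f g : V →ₗ[ℝ] V}
    (hf : ∀ x ∈ X, f x ∈ X') (hg : ∀ y ∈ Y, g y ∈ Y') :
    (tensorSub X Y).map (TensorProduct.map f g) ≤ tensorSub X' Y' := by
  rw [tensorSub, Submodule.map_span_le]
  rintro _ ⟨x, hx, y, hy, rfl⟩
  exact Submodule.subset_span ⟨f x, hf x hx, g y, hg y hy, TensorProduct.map_tmul f g x y⟩

theorem tensorSub_le_eqLocus {X Y : Submodule ℝ V} {f g : V →ₗ[ℝ] V}
    (hf : ∀ x ∈ X, f x = x) (hg : ∀ y ∈ Y, g y = y) :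
    tensorSub X Y ≤ LinearMap.eqLocus (TensorProduct.map f g) LinearMap.id := by
  rw [tensorSub, Submodule.span_le]
  rintro _ ⟨x, hx, y, hy, rfl⟩
  simp [hf x hx, hg y hy]

theorem tensorSub_inf_tensorSub (X Y X' Y' : Submodule ℝ V) :
    tensorSub X Y ⊓ tensorSub X' Y' = tensorSub (X ⊓ X') (Y ⊓ Y') := by
  refine le_antisymm (fun z ⟨hz, hz'⟩ => ?_)
    (le_inf (tensorSub_mono inf_le_left inf_le_left) (tensorSub_mono inf_le_right inf_le_right))
  obtain ⟨p, hpX, hpX'⟩ := X.exists_fixing_linearMap_mapsTo_inf X'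
  obtain ⟨q, hqY, hqY'⟩ := Y.exists_fixing_linearMap_mapsTo_inf Y'
  have hfix : TensorProduct.map p q z = z := tensorSub_le_eqLocus hpX hqY hz
  rw [← hfix]
  exact map_tensorSub_le hpX' hqY' ⟨z, hz', rfl⟩

theorem tensorSub_eq_range_mapIncl (X Y : Submodule ℝ V) :
    tensorSub X Y = LinearMap.range (mapIncl X Y) := by
  rw [tensorSub, range_map_eq_span_tmul]
  congr 1
  ext z
  exact ⟨fun ⟨x, hx, y, hy, hz⟩ => ⟨⟨x, hx⟩, ⟨y, hy⟩, hz.symm⟩,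
    fun ⟨x, y, hz⟩ => ⟨x, x.2, y, y.2, hz.symm⟩⟩

theorem finrank_tensorSub (X Y : Submodule ℝ V) :
    Module.finrank ℝ (tensorSub X Y) = Module.finrank ℝ X * Module.finrank ℝ Y := by
  rw [tensorSub_eq_range_mapIncl, LinearMap.finrank_range_of_inj
    (Module.Flat.tensorProduct_mapIncl_injective_of_right X Y), Module.finrank_tensorProduct]

end tensorSub

/-- if `A` is not contained in `B` and some linear automorphism `T`
of `V ⊗ V` maps `A ⊗ B` onto `B ⊗ B` and `A ⊗ C` onto `A ⊗ C`, then `B ∩ C = 0`. -/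
theorem inf_eq_bot_of_tensor_automorphism {V : Type*} [AddCommGroup V] [Module ℝ V]
    [FiniteDimensional ℝ V]
    (A B C : Submodule ℝ V) (hAB : ¬ A ≤ B)
    (T : TensorProduct ℝ V V ≃ₗ[ℝ] TensorProduct ℝ V V)
    (hT₁ : Submodule.map (T : TensorProduct ℝ V V →ₗ[ℝ] TensorProduct ℝ V V)
      (tensorSub A B) = tensorSub B B)
    (hT₂ : Submodule.map (T : TensorProduct ℝ V V →ₗ[ℝ] TensorProduct ℝ V V)
      (tensorSub A C) = tensorSub A C) :
    B ⊓ C = ⊥ := by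
  have hmaps : (tensorSub A (B ⊓ C)).map (T : TensorProduct ℝ V V →ₗ[ℝ] TensorProduct ℝ V V) ≤
      tensorSub (B ⊓ A) (B ⊓ C) := by
    rw [← tensorSub_inf_tensorSub, ← hT₁, ← hT₂]
    exact le_inf (Submodule.map_mono (tensorSub_mono le_rfl inf_le_left))
      (Submodule.map_mono (tensorSub_mono le_rfl inf_le_right))
  have hdim : Module.finrank ℝ A * Module.finrank ℝ ↥(B ⊓ C) ≤
      Module.finrank ℝ ↥(B ⊓ A) * Module.finrank ℝ ↥(B ⊓ C) := by
    rw [← finrank_tensorSub, ← finrank_tensorSub, ← LinearEquiv.finrank_map_eq T]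
    exact Submodule.finrank_mono hmaps
  have hlt : Module.finrank ℝ ↥(B ⊓ A) < Module.finrank ℝ A :=
    Submodule.finrank_lt_finrank_of_lt (inf_le_right.lt_of_ne fun h => hAB (h ▸ inf_le_left))
  rw [← Submodule.finrank_eq_zero]
  by_contra hne
  exact (Nat.mul_lt_mul_of_pos_right hlt (Nat.pos_of_ne_zero hne)).not_ge hdim
end
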